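/- arXiv:1507.07576 — 2 statements merged into one kernel-verified Lean document; each statement's English description precedes it below -/
import Mathlib

section
/- If X is a random variable with E X = 0 and |X| ≤ 1/2 almost surely, then E exp(λX) ≤ cosh(λ/2) for all real λ. -/
/-! Since `exp` is convex, on `[-a, a]` the function `x ↦ exp (l * x)` lies below its chord
`x ↦ cosh (l * a) + (x / a) * sinh (l * a)`. The chord is affine, so its expectation only sees
`E X = 0` and equals `cosh (l * a)`. -/

open MeasureTheory

lemma Real.exp_mul_le_cosh_add_div_mul_sinh {a x : ℝ} (hx : |x| ≤ a) (l : ℝ) :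
    Real.exp (l * x) ≤ Real.cosh (l * a) + x / a * Real.sinh (l * a) := by
  obtain ⟨hxa₁, hxa₂⟩ := abs_le.mp hx
  rcases (abs_nonneg x |>.trans hx).eq_or_lt with rfl | ha
  · obtain rfl : x = 0 := by linarith
    simp
  have hw₁ : 0 ≤ (a - x) / (2 * a) := div_nonneg (by linarith) (by linarith)
  have hw₂ : 0 ≤ (a + x) / (2 * a) := div_nonneg (by linarith) (by linarith)
  have hchord := convexOn_exp.2 (Set.mem_univ (-(l * a))) (Set.mem_univ (l * a)) hw₁ hw₂
    (by field_simp; ring)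
  have hpoint : (a - x) / (2 * a) * -(l * a) + (a + x) / (2 * a) * (l * a) = l * x := by
    field_simp; ring
  have hvalue : (a - x) / (2 * a) * Real.exp (-(l * a)) + (a + x) / (2 * a) * Real.exp (l * a)
      = Real.cosh (l * a) + x / a * Real.sinh (l * a) := by
    rw [Real.cosh_eq, Real.sinh_eq]; field_simp; ring
  simpa only [smul_eq_mul, hpoint, hvalue] using hchord

theorem integral_exp_mul_le_cosh_of_integral_eq_zero {Ω : Type*} [MeasurableSpace Ω]
    {μ : Measure Ω} [IsProbabilityMeasure μ] {X : Ω → ℝ} {a : ℝ}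
    (hX : AEStronglyMeasurable X μ) (hmean : ∫ ω, X ω ∂μ = 0)
    (hbdd : ∀ᵐ ω ∂μ, |X ω| ≤ a) (l : ℝ) :
    ∫ ω, Real.exp (l * X ω) ∂μ ≤ Real.cosh (l * a) := by
  have hXint : Integrable X μ := Integrable.of_bound hX a hbdd
  calc ∫ ω, Real.exp (l * X ω) ∂μ
      ≤ ∫ ω, Real.cosh (l * a) + X ω / a * Real.sinh (l * a) ∂μ := by
        refine integral_mono_of_nonneg (.of_forall fun ω => (Real.exp_pos _).le)
          ((integrable_const _).add ((hXint.div_const a).mul_const _)) ?_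
        filter_upwards [hbdd] with ω hω
        exact Real.exp_mul_le_cosh_add_div_mul_sinh hω l
    _ = Real.cosh (l * a) := by
        rw [integral_add (integrable_const _) ((hXint.div_const a).mul_const _),
          integral_mul_const, integral_div, hmean]
        simp

theorem hoeffding_type_cosh_bound {Ω : Type*} [MeasurableSpace Ω]
    (μ : Measure Ω) [IsProbabilityMeasure μ] (X : Ω → ℝ)
    (hX : Measurable X) (hmean : ∫ ω, X ω ∂μ = 0)
    (hbdd : ∀ᵐ ω ∂μ, |X ω| ≤ 1 / 2) (l : ℝ) :
    ∫ ω, Real.exp (l * X ω) ∂μ ≤ Real.cosh (l / 2) := by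
  simpa [div_eq_mul_inv] using
    integral_exp_mul_le_cosh_of_integral_eq_zero hX.aestronglyMeasurable hmean hbdd l
end

section
/- For every r ∈ (0,1), the limit as λ → 0 of arcosh(β_r(λ)) / (|λ|/2) equals 2√(r(1−r)), where β_r(λ) = r·e^{λ(1−r)} + (1−r)·e^{−λr}. -/
/-!
Both `β_r` and `cosh` are convex combinations of exponentials whose linear terms cancel, so
`e^x = 1 + x + x²/2 + o(x²)` gives `β_r(λ) - 1 ~ r(1-r)λ²/2` and `cosh y - 1 ~ y²/2`.
Putting `y = arcosh (β_r λ)`, so that `cosh y = β_r λ`, yields `y² ~ r(1-r)λ²`.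
-/

open Filter Topology Real

theorem tendsto_exp_mul_sub_one_sub_div_sq (c : ℝ) :
    Tendsto (fun x => (exp (c * x) - 1 - c * x) / x ^ 2) (𝓝[≠] 0) (𝓝 (c ^ 2 / 2)) := by
  have hlittleO : (fun x => exp (c * x) - 1 - c * x - c ^ 2 / 2 * x ^ 2) =o[𝓝 0] (· ^ 2) := by
    have htaylor := (exp_sub_sum_range_succ_isLittleO_pow 2).comp_tendsto
      ((continuous_const_mul c).tendsto' 0 0 (mul_zero c))
    refine (htaylor.trans_isBigO ?_).congr_left fun x => ?_
    · exact (Asymptotics.isBigO_const_mul_self (c ^ 2) _ _).congr_left fun x => by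
        simp only [Function.comp_apply]
        ring
    · simp only [Function.comp_apply, Finset.sum_range_succ, Finset.sum_range_zero, Nat.factorial]
      push_cast
      ring
  have h := (hlittleO.tendsto_div_nhds_zero.mono_left (nhdsWithin_le_nhds (s := {0}ᶜ))).add_const
    (c ^ 2 / 2)
  rw [zero_add] at h
  refine h.congr' ?_
  filter_upwards [self_mem_nhdsWithin] with x (hx : x ≠ 0)
  field_simp
  ring

theorem tendsto_cosh_sub_one_div_sq :
    Tendsto (fun y => (cosh y - 1) / y ^ 2) (𝓝[≠] 0) (𝓝 (1 / 2)) := by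
  have h := ((tendsto_exp_mul_sub_one_sub_div_sq 1).add
    (tendsto_exp_mul_sub_one_sub_div_sq (-1))).div_const 2
  rw [show ((1 : ℝ) ^ 2 / 2 + (-1) ^ 2 / 2) / 2 = 1 / 2 by norm_num] at h
  refine h.congr fun y => ?_
  rw [cosh_eq]
  ring_nf

theorem tendsto_arcosh_nhdsGT_one : Tendsto arcosh (𝓝[>] 1) (𝓝[>] 0) := by
  refine tendsto_nhdsWithin_iff.2 ⟨?_, eventually_nhdsWithin_of_forall fun z hz => arcosh_pos hz⟩
  have h := (continuousOn_arcosh 1 (Set.mem_Ici.2 le_rfl)).tendsto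
  rw [arcosh_zero] at h
  exact h.mono_left (nhdsWithin_mono _ Set.Ioi_subset_Ici_self)

theorem tendsto_arcosh_sq_div_sub_one :
    Tendsto (fun z => arcosh z ^ 2 / (z - 1)) (𝓝[>] 1) (𝓝 2) := by
  have hcosh := tendsto_cosh_sub_one_div_sq.comp
    (tendsto_arcosh_nhdsGT_one.mono_right (nhdsWithin_mono _ fun _ hy => ne_of_gt hy))
  have hinv := hcosh.inv₀ (by norm_num)
  rw [show (1 / 2 : ℝ)⁻¹ = 2 by norm_num] at hinv
  refine hinv.congr' ?_
  filter_upwards [self_mem_nhdsWithin] with z (hz : 1 < z)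
  simp only [Function.comp_apply, cosh_arcosh hz.le, inv_div]

/-- The moment generating function `β_r` of the centered Bernoulli variable `η_r`, which is
`1 - r` with probability `r` and `-r` with probability `1 - r`. -/
noncomputable def centeredBernoulliMGF (r l : ℝ) : ℝ :=
  r * exp (l * (1 - r)) + (1 - r) * exp (-l * r)

theorem one_lt_centeredBernoulliMGF {r l : ℝ} (hr : r ∈ Set.Ioo (0 : ℝ) 1) (hl : l ≠ 0) :
    1 < centeredBernoulliMGF r l := by
  obtain ⟨hr0, hr1⟩ := hr
  have hne : l * (1 - r) ≠ -l * r := fun h => hl (by linear_combination h)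
  have h := strictConvexOn_exp.2 (Set.mem_univ _) (Set.mem_univ _) hne hr0 (sub_pos.2 hr1)
    (add_sub_cancel r 1)
  simp only [smul_eq_mul] at h
  rwa [show r * (l * (1 - r)) + (1 - r) * (-l * r) = 0 by ring, exp_zero] at h

theorem tendsto_centeredBernoulliMGF_sub_one_div_sq (r : ℝ) :
    Tendsto (fun l => (centeredBernoulliMGF r l - 1) / l ^ 2) (𝓝[≠] 0)
      (𝓝 (r * (1 - r) / 2)) := by
  have h := ((tendsto_exp_mul_sub_one_sub_div_sq (1 - r)).const_mul r).add
    ((tendsto_exp_mul_sub_one_sub_div_sq (-r)).const_mul (1 - r))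
  rw [show r * ((1 - r) ^ 2 / 2) + (1 - r) * ((-r) ^ 2 / 2) = r * (1 - r) / 2 by ring] at h
  refine h.congr fun l => ?_
  simp only [centeredBernoulliMGF, mul_comm l, neg_mul]
  ring

theorem tendsto_centeredBernoulliMGF_nhdsGT_one {r : ℝ} (hr : r ∈ Set.Ioo (0 : ℝ) 1) :
    Tendsto (centeredBernoulliMGF r) (𝓝[≠] 0) (𝓝[>] 1) := by
  refine tendsto_nhdsWithin_iff.2 ⟨?_, eventually_nhdsWithin_of_forall fun l hl =>
    one_lt_centeredBernoulliMGF hr hl⟩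
  have h : Continuous (centeredBernoulliMGF r) := by
    unfold centeredBernoulliMGF
    fun_prop
  simpa [centeredBernoulliMGF] using (h.tendsto 0).mono_left nhdsWithin_le_nhds

theorem arcosh_beta_limit_zero (r : ℝ) (hr : r ∈ Set.Ioo (0 : ℝ) 1) :
    Tendsto (fun l : ℝ =>
        Real.log ((r * Real.exp (l * (1 - r)) + (1 - r) * Real.exp (-l * r)) +
          Real.sqrt ((r * Real.exp (l * (1 - r)) + (1 - r) * Real.exp (-l * r)) ^ 2 - 1))
          / (|l| / 2))
      (nhdsWithin 0 {0}ᶜ) (nhds (2 * Real.sqrt (r * (1 - r)))) := by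
  change Tendsto (fun l => arcosh (centeredBernoulliMGF r l) / (|l| / 2)) _ _
  have hβ := tendsto_centeredBernoulliMGF_nhdsGT_one hr
  have hlim := (((tendsto_arcosh_sq_div_sub_one.comp hβ).mul
    (tendsto_centeredBernoulliMGF_sub_one_div_sq r)).sqrt).const_mul 2
  rw [show 2 * (r * (1 - r) / 2) = r * (1 - r) by ring] at hlim
  refine hlim.congr' ?_
  filter_upwards [self_mem_nhdsWithin, hβ self_mem_nhdsWithin] with l (hl : l ≠ 0) hβl
  have hβl' : centeredBernoulliMGF r l - 1 ≠ 0 := sub_ne_zero.2 (ne_of_gt hβl)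
  simp only [Function.comp_apply]
  rw [div_mul_div_cancel₀ hβl', sqrt_div' _ (sq_nonneg l), sqrt_sq (arcosh_nonneg hβl.le),
    sqrt_sq_eq_abs]
  field_simp
end
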